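/- Let F be an M×N equiangular tight frame with (N−1)/(M(M−1)) ≥ α > 0, let C ≥ 1, and let p ≤ α(C²−1)²/(α(C²−1)² + (C²+1)²). Then for every subset K of the columns of size K = (1−p)N, the submatrix F_K has condition number at most C. -/

import Mathlib

/-! The eigenvalues `λᵢ` of `F_𝒦 F_𝒦*` are read off through traces: `∑ λᵢ = tr (F_𝒦* F_𝒦) = K`
since the columns are unit vectors, and `∑ λᵢ² = ‖F_𝒦* F_𝒦‖²_F = K + K (K - 1) μ²` with `μ` the
equiangularity constant. Hence the deviations `M λᵢ - K` sum to zero and have square sum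
`M K (M - 1) (N - K) / (N - 1)`, and Samuelson's inequality bounds each one:
`(M λᵢ - K)² ≤ (M - 1)² K (N - K) / (N - 1)`. The bound on `p` makes the right-hand side at most
`((C² - 1) / (C² + 1))² K²`, and any two numbers within `(C² - 1) / (C² + 1) · K` of `K` have
ratio at most `C²`. -/

open Finset Matrix

namespace Matrix

variable {𝕜 m n : Type*} [RCLike 𝕜] [Fintype m] [Fintype n]

theorem IsHermitian.trace_mul_self_eq_sum_sq_eigenvalues [DecidableEq n] {A : Matrix n n 𝕜}
    (hA : A.IsHermitian) : (A * A).trace = ∑ i, ((hA.eigenvalues i ^ 2 : ℝ) : 𝕜) := by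
  conv_lhs => rw [hA.spectral_theorem, ← map_mul, Unitary.conjStarAlgAut_apply,
    trace_mul_cycle, Unitary.coe_star_mul_self, one_mul, diagonal_mul_diagonal, trace_diagonal]
  simp [sq]

theorem IsHermitian.trace_mul_self_eq_sum_norm_sq {A : Matrix n n 𝕜} (hA : A.IsHermitian) :
    (A * A).trace = ∑ i, ∑ j, ((‖A i j‖ ^ 2 : ℝ) : 𝕜) := by
  simp only [trace, diag, mul_apply]
  refine sum_congr rfl fun i _ => sum_congr rfl fun j _ => ?_
  rw [← hA.apply j i, RCLike.star_def, RCLike.mul_conj, RCLike.ofReal_pow]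

variable [DecidableEq m] {A : Matrix m n 𝕜}

theorem sum_eigenvalues_mul_conjTranspose_self (hdiag : ∀ k, (Aᴴ * A) k k = 1) :
    ∑ i, (isHermitian_mul_conjTranspose_self A).eigenvalues i = Fintype.card n := by
  have htrace := (isHermitian_mul_conjTranspose_self A).trace_eq_sum_eigenvalues
  rw [trace_mul_comm, trace] at htrace
  simp only [diag_apply, hdiag, sum_const, card_univ, nsmul_one] at htrace
  exact_mod_cast htrace.symm

theorem sum_sq_eigenvalues_mul_conjTranspose_self [DecidableEq n] {μ : ℝ}
    (hdiag : ∀ k, (Aᴴ * A) k k = 1) (hoff : ∀ k k', k ≠ k' → ‖(Aᴴ * A) k k'‖ ^ 2 = μ) :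
    ∑ i, (isHermitian_mul_conjTranspose_self A).eigenvalues i ^ 2
      = Fintype.card n + Fintype.card n * (Fintype.card n - 1) * μ := by
  have hrow : ∀ k, ∑ k', ‖(Aᴴ * A) k k'‖ ^ 2 = 1 + (Fintype.card n - 1) * μ := fun k => by
    rw [← add_sum_erase _ _ (mem_univ k), hdiag,
      sum_congr rfl fun k' hk' => hoff k k' (ne_of_mem_erase hk').symm, sum_const,
      card_erase_of_mem (mem_univ k), card_univ, nsmul_eq_mul,
      Nat.cast_pred (Fintype.card_pos_iff.mpr ⟨k⟩)]
    simp
  have htrace := (isHermitian_mul_conjTranspose_self A).trace_mul_self_eq_sum_sq_eigenvalues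
  rw [show A * Aᴴ * (A * Aᴴ) = A * (Aᴴ * A * Aᴴ) by simp only [Matrix.mul_assoc],
    trace_mul_comm, Matrix.mul_assoc,
    (isHermitian_conjTranspose_mul_self A).trace_mul_self_eq_sum_norm_sq] at htrace
  simp only [← RCLike.ofReal_sum, hrow, RCLike.ofReal_inj, sum_const, card_univ,
    nsmul_eq_mul] at htrace
  rw [← htrace]
  ring

end Matrix

section Samuelson

variable {ι : Type*} [Fintype ι]

theorem card_mul_sq_le_of_sum_eq_zero {x : ι → ℝ} (hx : ∑ i, x i = 0) (j : ι) :
    Fintype.card ι * x j ^ 2 ≤ (Fintype.card ι - 1) * ∑ i, x i ^ 2 := by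
  classical
  have hsum : ∑ i ∈ univ.erase j, x i = -x j := by
    linarith [add_sum_erase univ x (mem_univ j)]
  have hsq : ∑ i ∈ univ.erase j, x i ^ 2 = ∑ i, x i ^ 2 - x j ^ 2 := by
    linarith [add_sum_erase univ (fun i => x i ^ 2) (mem_univ j)]
  have hcard : ((univ.erase j).card : ℝ) = Fintype.card ι - 1 := by
    rw [card_erase_of_mem (mem_univ j), card_univ, Nat.cast_pred (Fintype.card_pos_iff.mpr ⟨j⟩)]
  have hcs := sq_sum_le_card_mul_sum_sq (s := univ.erase j) (f := x)
  rw [hsum, hsq, hcard] at hcs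
  linarith

theorem card_mul_sq_card_mul_sub_sum_le (l : ι → ℝ) (j : ι) :
    Fintype.card ι * (Fintype.card ι * l j - ∑ i, l i) ^ 2
      ≤ (Fintype.card ι - 1)
        * (Fintype.card ι ^ 2 * ∑ i, l i ^ 2 - Fintype.card ι * (∑ i, l i) ^ 2) := by
  set M : ℝ := (Fintype.card ι : ℝ)
  have hx : ∑ i, (M * l i - ∑ i, l i) = 0 := by
    simp only [sum_sub_distrib, ← mul_sum, sum_const, card_univ, nsmul_eq_mul, M, sub_self]
  have hx2 : ∑ i, (M * l i - ∑ i, l i) ^ 2 = M ^ 2 * ∑ i, l i ^ 2 - M * (∑ i, l i) ^ 2 := by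
    simp only [sub_sq, sum_add_distrib, sum_sub_distrib, mul_pow, ← mul_sum, ← sum_mul,
      sum_const, card_univ, nsmul_eq_mul, M]
    ring
  simpa only [hx2] using card_mul_sq_le_of_sum_eq_zero hx j

theorem sq_card_mul_sub_le_of_sum_of_sum_sq {l : ι → ℝ} {K N : ℝ}
    (hN : 1 < N) (hsum : ∑ i, l i = K)
    (hsum_sq : ∑ i, l i ^ 2
      = K + K * (K - 1) * ((N - Fintype.card ι) / (Fintype.card ι * (N - 1)))) (j : ι) :
    (Fintype.card ι * l j - K) ^ 2 ≤ (Fintype.card ι - 1) ^ 2 * K * (N - K) / (N - 1) := by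
  set M : ℝ := (Fintype.card ι : ℝ)
  have hM : 0 < M := Nat.cast_pos.mpr (Fintype.card_pos_iff.mpr ⟨j⟩)
  have hN1 : 0 < N - 1 := by linarith
  have hvar : M ^ 2 * ∑ i, l i ^ 2 - M * (∑ i, l i) ^ 2
      = M * (M - 1) * K * (N - K) / (N - 1) := by
    rw [hsum, hsum_sq]
    field_simp
    ring
  have h := card_mul_sq_card_mul_sub_sum_le l j
  rw [hvar, hsum] at h
  refine le_of_mul_le_mul_left ?_ hM
  calc M * (M * l j - K) ^ 2 ≤ (M - 1) * (M * (M - 1) * K * (N - K) / (N - 1)) := h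
    _ = M * ((M - 1) ^ 2 * K * (N - K) / (N - 1)) := by ring

end Samuelson

theorem le_mul_of_sq_sub_le_of_sq_sub_le {a c x y D : ℝ} (ha : 0 ≤ a) (hc : 1 ≤ c)
    (hx : (x - a) ^ 2 ≤ D) (hy : (y - a) ^ 2 ≤ D) (hD : (c + 1) ^ 2 * D ≤ (c - 1) ^ 2 * a ^ 2) :
    x ≤ c * y := by
  have hdev : ∀ z, (z - a) ^ 2 ≤ D → |(c + 1) * (z - a)| ≤ (c - 1) * a := fun z hz =>
    abs_le_of_sq_le_sq (by nlinarith) (by nlinarith)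
  have hx' := (abs_le.mp (hdev x hx)).2
  have hy' := (abs_le.mp (hdev y hy)).1
  nlinarith

theorem mul_sub_one_sq_le_of_le_div {α M N : ℝ} (hα : 0 ≤ α) (hM : 1 ≤ M) (hN : 1 ≤ N)
    (hαF : α ≤ (N - 1) / (M * (M - 1))) : α * (M - 1) ^ 2 ≤ N - 1 := by
  rcases hM.eq_or_lt with rfl | hM
  · simpa using hN
  · have hαM := (le_div_iff₀ (by nlinarith)).mp hαF
    nlinarith

theorem erasure_fraction_bound {α c p M N K : ℝ} (hα : 0 ≤ α) (hc : 0 ≤ c) (hN : 1 < N)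
    (hαM : α * (M - 1) ^ 2 ≤ N - 1)
    (hp : p ≤ α * (c - 1) ^ 2 / (α * (c - 1) ^ 2 + (c + 1) ^ 2))
    (hK0 : 0 ≤ K) (hK : K = (1 - p) * N) :
    (c + 1) ^ 2 * ((M - 1) ^ 2 * K * (N - K) / (N - 1)) ≤ (c - 1) ^ 2 * K ^ 2 := by
  have hN1 : 0 < N - 1 := by linarith
  have hp1 : 0 ≤ 1 - p := nonneg_of_mul_nonneg_left (hK ▸ hK0) (by linarith)
  have hp' : p * (c + 1) ^ 2 ≤ α * (c - 1) ^ 2 * (1 - p) := by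
    have := (le_div_iff₀ (by positivity)).mp hp
    linarith
  have key : (c + 1) ^ 2 * (M - 1) ^ 2 * p ≤ (c - 1) ^ 2 * (1 - p) * (N - 1) := by
    calc (c + 1) ^ 2 * (M - 1) ^ 2 * p = (M - 1) ^ 2 * (p * (c + 1) ^ 2) := by ring
      _ ≤ (M - 1) ^ 2 * (α * (c - 1) ^ 2 * (1 - p)) := by gcongr
      _ = (α * (M - 1) ^ 2) * ((c - 1) ^ 2 * (1 - p)) := by ring
      _ ≤ (N - 1) * ((c - 1) ^ 2 * (1 - p)) := by gcongr
      _ = (c - 1) ^ 2 * (1 - p) * (N - 1) := by ring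
  have hNK : N - K = p * N := by rw [hK]; ring
  calc (c + 1) ^ 2 * ((M - 1) ^ 2 * K * (N - K) / (N - 1))
      = (c + 1) ^ 2 * (M - 1) ^ 2 * p * (K * N / (N - 1)) := by rw [hNK]; ring
    _ ≤ (c - 1) ^ 2 * (1 - p) * (N - 1) * (K * N / (N - 1)) :=
        mul_le_mul_of_nonneg_right key (div_nonneg (mul_nonneg hK0 (by linarith)) hN1.le)
    _ = (c - 1) ^ 2 * K ^ 2 := by rw [hK]; field_simp

theorem ciSup_le_mul_ciInf {ι : Type*} {f : ι → ℝ} {c : ℝ} (hc : 0 ≤ c)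
    (h : ∀ i j, f i ≤ c * f j) : ⨆ i, f i ≤ c * ⨅ i, f i := by
  cases isEmpty_or_nonempty ι
  · simp
  · rw [Real.mul_iInf_of_nonneg hc]
    exact ciSup_le fun i => le_ciInf fun j => h i j

theorem stmt_4_general (M N : ℕ) (hM : 1 ≤ M) (hN : 1 < N)
    (F : Matrix (Fin M) (Fin N) ℂ)
    (hcols : ∀ n : Fin N, ∑ m : Fin M, (starRingEnd ℂ) (F m n) * F m n = 1)
    (hang : ∀ n n' : Fin N, n ≠ n' →
      ‖∑ m : Fin M, (starRingEnd ℂ) (F m n) * F m n'‖ ^ 2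
        = ((N : ℝ) - M) / (M * ((N : ℝ) - 1)))
    (α : ℝ) (hα : 0 < α) (hαF : α ≤ ((N : ℝ) - 1) / (M * ((M : ℝ) - 1)))
    (C : ℝ) (hC : 1 ≤ C)
    (p : ℝ)
    (hp : p ≤ α * (C ^ 2 - 1) ^ 2 / (α * (C ^ 2 - 1) ^ 2 + (C ^ 2 + 1) ^ 2))
    (𝒦 : Finset (Fin N)) (h𝒦 : (𝒦.card : ℝ) = (1 - p) * N) :
    (⨆ i : Fin M,
        (Matrix.isHermitian_mul_conjTranspose_self
          (F.submatrix id (fun k : {n // n ∈ 𝒦} => (k : Fin N)))).eigenvalues i)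
      ≤ C ^ 2 *
      (⨅ i : Fin M,
        (Matrix.isHermitian_mul_conjTranspose_self
          (F.submatrix id (fun k : {n // n ∈ 𝒦} => (k : Fin N)))).eigenvalues i) := by
  set A := F.submatrix id (fun k : {n // n ∈ 𝒦} => (k : Fin N))
  have hgram : ∀ k k', (Aᴴ * A) k k' = ∑ m, (starRingEnd ℂ) (F m k) * F m k' := fun k k' => by
    simp [A, Matrix.mul_apply]
  have hdiag : ∀ k, (Aᴴ * A) k k = 1 := fun k => (hgram k k).trans (hcols k)
  have hN' : (1 : ℝ) < N := by exact_mod_cast hN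
  have hsum := Matrix.sum_eigenvalues_mul_conjTranspose_self hdiag
  have hsum_sq := Matrix.sum_sq_eigenvalues_mul_conjTranspose_self hdiag
    fun k k' hkk' => hgram k k' ▸ hang k k' (Subtype.coe_ne_coe.mpr hkk')
  rw [Fintype.card_coe] at hsum hsum_sq
  have hdev := sq_card_mul_sub_le_of_sum_of_sum_sq hN' hsum (by simpa using hsum_sq)
  simp only [Fintype.card_fin] at hdev
  have hbound := erasure_fraction_bound hα.le (sq_nonneg C) hN'
    (mul_sub_one_sq_le_of_le_div hα.le (by exact_mod_cast hM) hN'.le hαF) hp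
    (Nat.cast_nonneg _) h𝒦
  have hM' : (0 : ℝ) < M := by exact_mod_cast hM
  refine ciSup_le_mul_ciInf (sq_nonneg C) fun i j => le_of_mul_le_mul_left ?_ hM'
  rw [mul_left_comm]
  exact le_mul_of_sq_sub_le_of_sq_sub_le (Nat.cast_nonneg _) (one_le_pow₀ hC)
    (hdev i) (hdev j) hbound

/-- Every M×N equiangular tight frame with (N−1)/(M(M−1)) ≥ α > 0 is a
(p,C)-numerically erasure-robust frame for every
p ≤ α(C²−1)²/(α(C²−1)² + (C²+1)²): for each subset 𝒦 of columns of size (1−p)N,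
the submatrix F_𝒦 has condition number (ratio of extreme singular values) at most C,
i.e. λmax(F_𝒦 F_𝒦*) ≤ C² λmin(F_𝒦 F_𝒦*). -/
theorem stmt_4 (M N : ℕ) (hM : 1 ≤ M) (hN : 1 < N)
    (F : Matrix (Fin M) (Fin N) ℂ)
    (hcols : ∀ n : Fin N, ∑ m : Fin M, (starRingEnd ℂ) (F m n) * F m n = 1)
    (htight : F * F.conjTranspose = ((N : ℂ) / M) • (1 : Matrix (Fin M) (Fin M) ℂ))
    (hang : ∀ n n' : Fin N, n ≠ n' →
      ‖∑ m : Fin M, (starRingEnd ℂ) (F m n) * F m n'‖ ^ 2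
        = ((N : ℝ) - M) / (M * ((N : ℝ) - 1)))
    (α : ℝ) (hα : 0 < α) (hαF : α ≤ ((N : ℝ) - 1) / (M * ((M : ℝ) - 1)))
    (C : ℝ) (hC : 1 ≤ C)
    (p : ℝ) (hp0 : 0 ≤ p)
    (hp : p ≤ α * (C ^ 2 - 1) ^ 2 / (α * (C ^ 2 - 1) ^ 2 + (C ^ 2 + 1) ^ 2))
    (𝒦 : Finset (Fin N)) (h𝒦pos : 0 < 𝒦.card) (h𝒦 : (𝒦.card : ℝ) = (1 - p) * N) :
    (⨆ i : Fin M,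
        (Matrix.isHermitian_mul_conjTranspose_self
          (F.submatrix id (fun k : {n // n ∈ 𝒦} => (k : Fin N)))).eigenvalues i)
      ≤ C ^ 2 *
      (⨅ i : Fin M,
        (Matrix.isHermitian_mul_conjTranspose_self
          (F.submatrix id (fun k : {n // n ∈ 𝒦} => (k : Fin N)))).eigenvalues i) :=
  stmt_4_general M N hM hN F hcols hang α hα hαF C hC p hp 𝒦 h𝒦
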